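/- Let α > 1. There exists C > 0 depending only on α such that for every t > 0 and every family (a_r)_{r∈[0,t]} of functions a_r : ℤ² → ℂ with a_r(0) = 0, such that r ↦ a_r(m) is continuous on [0,t] for every m and sup_{r∈[0,t]} ∑_{m∈ℤ²∖{0}} |m|^{−2(α+1)}|a_r(m)|² < ∞, one has: ∫₀ᵗ ∑_{k∈ℤ²∖{0}} |k|^{−2α} ( ∫ₛᵗ e^{−|k|²(r−s)} ( ∑_{ℓ∈ℤ², 0<|ℓ|≤√2, ℓ≠k} (1 − |k|²/|ℓ−k|²)² |a_r(ℓ−k)|² )^{1/2} dr )² ds ≤ C t³ sup_{r∈[0,t]} ∑_{m∈ℤ²∖{0}} |m|^{−2(α+1)}|a_r(m)|². -/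

import Mathlib

/-!
Dropping the heat factor `e^{-|k|²(r-s)} ≤ 1` and applying Cauchy–Schwarz in time bounds the
`k`-th term by `(t - s) ∫ |k|^{-2α} ∑_ℓ (1 - |k|²/|ℓ-k|²)² |a_r(ℓ-k)|² dr`. For `|ℓ|² ≤ 2` the
multiplier equals `(2 ℓ·(ℓ-k) - |ℓ|²) / |ℓ-k|² = O(|ℓ-k|⁻¹)` and `|k| ≍ |ℓ-k|`, so each summand
is at most `24 · 6^α |ℓ-k|^{-2(α+1)} |a_r(ℓ-k)|²`. Summing over `k`, each of the at most nine
low modes `ℓ` contributes one copy of `‖a_r‖²_{H^{-(α+1)}}`, which gives `C = 216 · 6^α`.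
-/
open scoped ENNReal
open MeasureTheory intervalIntegral

/-- Squared Euclidean norm of a lattice point `k ∈ ℤ²`. -/
noncomputable def nsq (k : ℤ × ℤ) : ℝ := (k.1 : ℝ) ^ 2 + (k.2 : ℝ) ^ 2

lemma ofReal_tsum_le_tsum_ofReal {ι : Type*} {f : ι → ℝ} (hf : ∀ i, 0 ≤ f i) :
    ENNReal.ofReal (∑' i, f i) ≤ ∑' i, ENNReal.ofReal (f i) := by
  by_cases h : Summable f
  · exact (ENNReal.ofReal_tsum_of_nonneg hf h).le
  · simp [tsum_eq_zero_of_not_summable h]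

section Lebesgue

variable {X : Type*} [MeasurableSpace X] (μ : Measure X)

/-- Replacing each `f i` by a measurable minorant with the same integral removes the
measurability assumption of `lintegral_tsum` in this direction. -/
lemma tsum_lintegral_le_lintegral_tsum {ι : Type*} [Countable ι] (f : ι → X → ℝ≥0∞) :
    ∑' i, ∫⁻ x, f i x ∂μ ≤ ∫⁻ x, ∑' i, f i x ∂μ := by
  choose g hg hgf hfg using fun i => exists_measurable_le_lintegral_eq μ (f i)
  calc ∑' i, ∫⁻ x, f i x ∂μ = ∫⁻ x, ∑' i, g i x ∂μ := by
        rw [lintegral_tsum fun i => (hg i).aemeasurable]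
        exact tsum_congr hfg
    _ ≤ ∫⁻ x, ∑' i, f i x ∂μ := lintegral_mono fun x => ENNReal.tsum_le_tsum fun i => hgf i x

lemma sq_lintegral_le_measure_univ_mul (f : X → ℝ≥0∞) :
    (∫⁻ x, f x ∂μ) ^ 2 ≤ μ Set.univ * ∫⁻ x, f x ^ 2 ∂μ := by
  obtain ⟨g, hg, hgf, hfg⟩ := exists_measurable_le_lintegral_eq μ f
  have holder := ENNReal.lintegral_mul_le_Lp_mul_Lq μ Real.HolderConjugate.two_two
    (aemeasurable_const (b := (1 : ℝ≥0∞))) hg.aemeasurable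
  simp only [Pi.mul_apply, one_mul, ENNReal.one_rpow, lintegral_one] at holder
  have rpow_two : ∀ y : ℝ≥0∞, y ^ (2 : ℝ) = y ^ 2 := fun y => by
    exact_mod_cast ENNReal.rpow_natCast y 2
  calc (∫⁻ x, f x ∂μ) ^ 2
      ≤ ((μ Set.univ) ^ (1 / 2 : ℝ) * (∫⁻ x, g x ^ (2 : ℝ) ∂μ) ^ (1 / 2 : ℝ)) ^ 2 := by
        rw [hfg]; gcongr
    _ = μ Set.univ * ∫⁻ x, g x ^ 2 ∂μ := by
        have half_sq : ∀ y : ℝ≥0∞, (y ^ (1 / 2 : ℝ)) ^ 2 = y := fun y => by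
          rw [← ENNReal.rpow_natCast, ← ENNReal.rpow_mul]; norm_num
        simp_rw [mul_pow, half_sq, rpow_two]
    _ ≤ μ Set.univ * ∫⁻ x, f x ^ 2 ∂μ := by gcongr with x; exact hgf x

end Lebesgue

lemma enorm_intervalIntegral_sq_le {E : Type*} [NormedAddCommGroup E] [NormedSpace ℝ E]
    {s t : ℝ} (hst : s ≤ t) (f : ℝ → E) :
    ‖∫ r in s..t, f r‖ₑ ^ 2 ≤ ENNReal.ofReal (t - s) * ∫⁻ r in Set.Ioc s t, ‖f r‖ₑ ^ 2 := by
  rw [integral_of_le hst, ← Real.volume_Ioc, ← Measure.restrict_apply_univ]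
  calc ‖∫ r in Set.Ioc s t, f r‖ₑ ^ 2 ≤ (∫⁻ r in Set.Ioc s t, ‖f r‖ₑ) ^ 2 := by
        gcongr; exact enorm_integral_le_lintegral_enorm _
    _ ≤ _ := sq_lintegral_le_measure_univ_mul _ _

lemma ofReal_sq_eq_enorm_sq (x : ℝ) : ENNReal.ofReal (x ^ 2) = ‖x‖ₑ ^ 2 := by
  rw [Real.enorm_eq_ofReal_abs, ← ENNReal.ofReal_pow (abs_nonneg x), sq_abs]

lemma ofReal_mul_sq_integral_exp_mul_sqrt_le {c n s t : ℝ} (hc : 0 ≤ c) (hn : 0 ≤ n)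
    (hst : s ≤ t) {S : ℝ → ℝ} (hS : ∀ r, 0 ≤ S r) :
    ENNReal.ofReal (c * (∫ r in s..t, Real.exp (-n * (r - s)) * Real.sqrt (S r)) ^ 2) ≤
      ENNReal.ofReal (t - s) * ∫⁻ r in Set.Ioc s t, ENNReal.ofReal (c * S r) := by
  have heat_le : ∀ r ∈ Set.Ioc s t,
      ‖Real.exp (-n * (r - s)) * Real.sqrt (S r)‖ₑ ^ 2 ≤ ENNReal.ofReal (S r) := by
    intro r hr
    have hexp : Real.exp (-n * (r - s)) ≤ 1 :=
      Real.exp_le_one_iff.mpr (by nlinarith [hr.1])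
    rw [← ofReal_sq_eq_enorm_sq, mul_pow, Real.sq_sqrt (hS r)]
    exact ENNReal.ofReal_le_ofReal
      (mul_le_of_le_one_left (hS r) (pow_le_one₀ (Real.exp_nonneg _) hexp))
  calc ENNReal.ofReal (c * (∫ r in s..t, Real.exp (-n * (r - s)) * Real.sqrt (S r)) ^ 2)
      = ENNReal.ofReal c * ‖∫ r in s..t, Real.exp (-n * (r - s)) * Real.sqrt (S r)‖ₑ ^ 2 := by
        rw [ENNReal.ofReal_mul hc, ofReal_sq_eq_enorm_sq]
    _ ≤ ENNReal.ofReal c *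
          (ENNReal.ofReal (t - s) * ∫⁻ r in Set.Ioc s t, ENNReal.ofReal (S r)) := by
        gcongr
        refine (enorm_intervalIntegral_sq_le hst _).trans ?_
        gcongr 1
        exact setLIntegral_mono' measurableSet_Ioc heat_le
    _ = ENNReal.ofReal (t - s) * ∫⁻ r in Set.Ioc s t, ENNReal.ofReal (c * S r) := by
        simp_rw [ENNReal.ofReal_mul hc]
        rw [lintegral_const_mul' _ _ ENNReal.ofReal_ne_top]
        ring

lemma nsq_nonneg (k : ℤ × ℤ) : 0 ≤ nsq k := by unfold nsq; positivity

lemma one_le_nsq {k : ℤ × ℤ} (hk : k ≠ 0) : 1 ≤ nsq k := by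
  have one_le_sq : ∀ z : ℤ, z ≠ 0 → (1 : ℝ) ≤ (z : ℝ) ^ 2 := fun z hz => by
    exact_mod_cast (one_le_sq_iff_one_le_abs _).mpr (Int.one_le_abs hz)
  have hk' : k.1 ≠ 0 ∨ k.2 ≠ 0 := by
    contrapose! hk; exact Prod.ext hk.1 hk.2
  unfold nsq
  rcases hk' with h | h
  · nlinarith [one_le_sq _ h, sq_nonneg (k.2 : ℝ)]
  · nlinarith [one_le_sq _ h, sq_nonneg (k.1 : ℝ)]

lemma nsq_sub (ℓ k : ℤ × ℤ) :
    nsq (ℓ - k) = ((ℓ.1 : ℝ) - k.1) ^ 2 + ((ℓ.2 : ℝ) - k.2) ^ 2 := by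
  simp [nsq]

lemma mem_Icc_of_nsq_le_two {ℓ : ℤ × ℤ} (hℓ : nsq ℓ ≤ 2) :
    ℓ ∈ Finset.Icc ((-1, -1) : ℤ × ℤ) (1, 1) := by
  have coord_bound : ∀ z : ℤ, (z : ℝ) ^ 2 ≤ 2 → -1 ≤ z ∧ z ≤ 1 := fun z hz => by
    have hz' : (z : ℝ) ^ 2 < 2 ^ 2 := by linarith
    have := abs_lt_of_sq_lt_sq' (by exact_mod_cast hz' : z ^ 2 < 2 ^ 2) (by norm_num)
    omega
  unfold nsq at hℓ
  obtain ⟨h₁, h₁'⟩ := coord_bound ℓ.1 (by nlinarith [sq_nonneg (ℓ.2 : ℝ)])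
  obtain ⟨h₂, h₂'⟩ := coord_bound ℓ.2 (by nlinarith [sq_nonneg (ℓ.1 : ℝ)])
  exact Finset.mem_Icc.mpr ⟨⟨h₁, h₂⟩, ⟨h₁', h₂'⟩⟩

lemma nsq_sub_le_six_mul {k ℓ : ℤ × ℤ} (hk : k ≠ 0) (hℓ : nsq ℓ ≤ 2) :
    nsq (ℓ - k) ≤ 6 * nsq k := by
  have hk1 := one_le_nsq hk
  rw [nsq_sub]
  unfold nsq at *
  nlinarith [sq_nonneg ((ℓ.1 : ℝ) + k.1), sq_nonneg ((ℓ.2 : ℝ) + k.2)]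

/-- With `m = ℓ - k`, `|m|² - |k|² = 2 ℓ·m - |ℓ|²`, which Cauchy–Schwarz bounds by `O(|m|)`. -/
lemma sq_nsq_sub_sub_nsq_le {k ℓ : ℤ × ℤ} (hℓk : ℓ ≠ k) (hℓ : nsq ℓ ≤ 2) :
    (nsq (ℓ - k) - nsq k) ^ 2 ≤ 24 * nsq (ℓ - k) := by
  have hm := one_le_nsq (sub_ne_zero.mpr hℓk)
  obtain ⟨x₁, x₂⟩ := ℓ
  obtain ⟨k₁, k₂⟩ := k
  rw [nsq_sub] at hm ⊢
  unfold nsq at *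
  simp only at *
  set m₁ : ℝ := x₁ - k₁
  set m₂ : ℝ := x₂ - k₂
  have hk : (k₁ : ℝ) ^ 2 + (k₂ : ℝ) ^ 2 = (x₁ - m₁) ^ 2 + (x₂ - m₂) ^ 2 := by ring
  have cauchy_schwarz :
      (x₁ * m₁ + x₂ * m₂) ^ 2 ≤ (x₁ ^ 2 + x₂ ^ 2) * (m₁ ^ 2 + m₂ ^ 2) := by
    nlinarith [sq_nonneg ((x₁ : ℝ) * m₂ - x₂ * m₁)]
  rw [hk]
  nlinarith [sq_nonneg (2 * (x₁ * m₁ + x₂ * m₂) + (x₁ ^ 2 + x₂ ^ 2))]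

lemma rpow_neg_mul_sq_one_sub_div_le {α : ℝ} (hα : 0 ≤ α) {k ℓ : ℤ × ℤ} (hk : k ≠ 0)
    (hℓk : ℓ ≠ k) (hℓ : nsq ℓ ≤ 2) :
    nsq k ^ (-α) * (1 - nsq k / nsq (ℓ - k)) ^ 2 ≤ 24 * 6 ^ α * nsq (ℓ - k) ^ (-(α + 1)) := by
  have hn := one_le_nsq hk
  have hq := one_le_nsq (sub_ne_zero.mpr hℓk)
  set n := nsq k
  set q := nsq (ℓ - k)
  have hq0 : 0 < q := by linarith
  have multiplier_le : (1 - n / q) ^ 2 ≤ 24 * q⁻¹ := by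
    rw [one_sub_div hq0.ne', div_pow, div_le_iff₀ (by positivity),
      show 24 * q⁻¹ * q ^ 2 = 24 * q by field_simp]
    exact sq_nsq_sub_sub_nsq_le hℓk hℓ
  have weight_le : n ^ (-α) ≤ 6 ^ α * q ^ (-α) := by
    have h := Real.rpow_le_rpow_of_nonpos hq0 (nsq_sub_le_six_mul hk hℓ) (neg_nonpos.mpr hα)
    rw [Real.mul_rpow (by norm_num) (by linarith), Real.rpow_neg (by norm_num)] at h
    rwa [inv_mul_le_iff₀ (by positivity)] at h
  calc n ^ (-α) * (1 - n / q) ^ 2 ≤ (6 ^ α * q ^ (-α)) * (24 * q⁻¹) :=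
        mul_le_mul weight_le multiplier_le (sq_nonneg _) (by positivity)
    _ = 24 * 6 ^ α * q ^ (-(α + 1)) := by
        rw [neg_add, Real.rpow_add hq0, Real.rpow_neg_one]; ring

/-- `|m|^{2σ} |b(m)|²`, the contribution of the mode `m` to `‖b‖²_{H^σ}`. -/
noncomputable def modeEnergy (σ : ℝ) (b : ℤ × ℤ → ℂ) (m : ℤ × ℤ) : ℝ≥0∞ :=
  ENNReal.ofReal (nsq m ^ σ * ‖b m‖ ^ 2)

/-- The homogeneous Sobolev norm `‖b‖²_{H^σ}` of the mean-free part of `b`. -/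
noncomputable def sobolevSq (σ : ℝ) (b : ℤ × ℤ → ℂ) : ℝ≥0∞ :=
  ∑' m, if m ≠ 0 then modeEnergy σ b m else 0

/-- The low-mode part of `‖R[σ_k] b‖²`, read off from the Fourier coefficients `b`. -/
noncomputable def lowModeMultiplierSq (k : ℤ × ℤ) (b : ℤ × ℤ → ℂ) : ℝ :=
  ∑' ℓ, if ℓ ≠ 0 ∧ nsq ℓ ≤ 2 ∧ ℓ ≠ k then (1 - nsq k / nsq (ℓ - k)) ^ 2 * ‖b (ℓ - k)‖ ^ 2 else 0

lemma lowModeMultiplierSq_nonneg (k : ℤ × ℤ) (b : ℤ × ℤ → ℂ) : 0 ≤ lowModeMultiplierSq k b :=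
  tsum_nonneg fun ℓ => by split_ifs <;> positivity

lemma ofReal_rpow_neg_mul_lowModeMultiplierSq_le {α : ℝ} (hα : 0 ≤ α) {k : ℤ × ℤ} (hk : k ≠ 0)
    (b : ℤ × ℤ → ℂ) :
    ENNReal.ofReal (nsq k ^ (-α) * lowModeMultiplierSq k b) ≤
      ENNReal.ofReal (24 * 6 ^ α) *
        ∑' ℓ, if ℓ ≠ 0 ∧ nsq ℓ ≤ 2 ∧ ℓ ≠ k then modeEnergy (-(α + 1)) b (ℓ - k) else 0 := by
  rw [lowModeMultiplierSq, ← tsum_mul_left, ← ENNReal.tsum_mul_left]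
  have weight_nonneg := Real.rpow_nonneg (nsq_nonneg k) (-α)
  refine (ofReal_tsum_le_tsum_ofReal fun ℓ => by split_ifs <;> positivity).trans
    (ENNReal.tsum_le_tsum fun ℓ => ?_)
  split_ifs with hℓ
  · rw [modeEnergy, ← ENNReal.ofReal_mul (by positivity), ← mul_assoc, ← mul_assoc]
    exact ENNReal.ofReal_le_ofReal <| mul_le_mul_of_nonneg_right
      (rpow_neg_mul_sq_one_sub_div_le hα hk hℓ.2.2 hℓ.2.1) (sq_nonneg _)
  · simp

/-- For a fixed low mode `ℓ`, the map `k ↦ ℓ - k` is a bijection, so each of the nine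
candidate low modes contributes at most one copy of the full sum. -/
lemma tsum_tsum_low_mode_shift_le (g : ℤ × ℤ → ℝ≥0∞) :
    ∑' k, ∑' ℓ, (if ℓ ≠ 0 ∧ nsq ℓ ≤ 2 ∧ ℓ ≠ k then g (ℓ - k) else 0) ≤
      9 * ∑' m, if m ≠ 0 then g m else 0 := by
  set total := ∑' m, if m ≠ 0 then g m else 0
  have shift_le : ∀ ℓ : ℤ × ℤ,
      ∑' k, (if ℓ ≠ 0 ∧ nsq ℓ ≤ 2 ∧ ℓ ≠ k then g (ℓ - k) else 0) ≤
        if nsq ℓ ≤ 2 then total else 0 := by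
    intro ℓ
    split_ifs with hℓ
    · rw [← (Equiv.subLeft ℓ).tsum_eq]
      refine ENNReal.tsum_le_tsum fun m => ?_
      simp only [Equiv.subLeft_apply, sub_sub_cancel, ne_eq]
      split_ifs <;> simp_all
    · simp [hℓ]
  calc ∑' k, ∑' ℓ, (if ℓ ≠ 0 ∧ nsq ℓ ≤ 2 ∧ ℓ ≠ k then g (ℓ - k) else 0)
      = ∑' ℓ, ∑' k, (if ℓ ≠ 0 ∧ nsq ℓ ≤ 2 ∧ ℓ ≠ k then g (ℓ - k) else 0) := ENNReal.tsum_comm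
    _ ≤ ∑' ℓ : ℤ × ℤ, if nsq ℓ ≤ 2 then total else 0 := ENNReal.tsum_le_tsum shift_le
    _ = ∑ ℓ ∈ Finset.Icc ((-1, -1) : ℤ × ℤ) (1, 1), if nsq ℓ ≤ 2 then total else 0 :=
        tsum_eq_sum fun ℓ hℓ => if_neg (mt mem_Icc_of_nsq_le_two hℓ)
    _ ≤ ∑ _ℓ ∈ Finset.Icc ((-1, -1) : ℤ × ℤ) (1, 1), total :=
        Finset.sum_le_sum fun ℓ _ => by split_ifs <;> simp
    _ = 9 * total := by
        rw [Finset.sum_const, show (Finset.Icc ((-1, -1) : ℤ × ℤ) (1, 1)).card = 9 from rfl,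
          nsmul_eq_mul]
        norm_num

section LowModeBound

variable {α : ℝ} {s t : ℝ} (a : ℝ → ℤ × ℤ → ℂ)

lemma ofReal_rpow_neg_mul_sq_integral_le (hα : 0 ≤ α) {k : ℤ × ℤ} (hk : k ≠ 0)
    (hs : s ∈ Set.Ioc 0 t) :
    ENNReal.ofReal (nsq k ^ (-α) *
        (∫ r in s..t, Real.exp (-nsq k * (r - s)) * Real.sqrt (lowModeMultiplierSq k (a r))) ^ 2) ≤
      ENNReal.ofReal t * ∫⁻ r in Set.Ioc 0 t, ENNReal.ofReal (24 * 6 ^ α) *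
        ∑' ℓ, if ℓ ≠ 0 ∧ nsq ℓ ≤ 2 ∧ ℓ ≠ k then modeEnergy (-(α + 1)) (a r) (ℓ - k) else 0 :=
  calc _ ≤ ENNReal.ofReal (t - s) * ∫⁻ r in Set.Ioc s t,
          ENNReal.ofReal (nsq k ^ (-α) * lowModeMultiplierSq k (a r)) :=
        ofReal_mul_sq_integral_exp_mul_sqrt_le (Real.rpow_nonneg (nsq_nonneg k) _) (nsq_nonneg k)
          hs.2 fun r => lowModeMultiplierSq_nonneg k (a r)
    _ ≤ ENNReal.ofReal t * ∫⁻ r in Set.Ioc 0 t,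
          ENNReal.ofReal (nsq k ^ (-α) * lowModeMultiplierSq k (a r)) := by
        gcongr
        · linarith [hs.1]
        · exact hs.1.le
    _ ≤ _ := by
        gcongr with r
        exact ofReal_rpow_neg_mul_lowModeMultiplierSq_le hα hk (a r)

lemma tsum_ofReal_rpow_neg_mul_sq_integral_le (hα : 0 ≤ α) (hs : s ∈ Set.Ioc 0 t) :
    ∑' k : ℤ × ℤ, (if k ≠ 0 then ENNReal.ofReal (nsq k ^ (-α) *
        (∫ r in s..t, Real.exp (-nsq k * (r - s)) * Real.sqrt (lowModeMultiplierSq k (a r))) ^ 2)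
      else 0) ≤
      ENNReal.ofReal t * (ENNReal.ofReal (24 * 6 ^ α) *
        (9 * ⨆ r ∈ Set.Icc 0 t, sobolevSq (-(α + 1)) (a r)) * ENNReal.ofReal t) := by
  set M := ⨆ r ∈ Set.Icc 0 t, sobolevSq (-(α + 1)) (a r)
  have low_mode_sum_le : ∀ r ∈ Set.Ioc 0 t,
      ∑' k, ∑' ℓ, (if ℓ ≠ 0 ∧ nsq ℓ ≤ 2 ∧ ℓ ≠ k then modeEnergy (-(α + 1)) (a r) (ℓ - k) else 0)
        ≤ 9 * M := fun r hr =>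
    (tsum_tsum_low_mode_shift_le _).trans <| by
      gcongr
      exact le_biSup (fun r => sobolevSq (-(α + 1)) (a r)) (Set.Ioc_subset_Icc_self hr)
  calc _ ≤ ∑' k : ℤ × ℤ, ENNReal.ofReal t * ∫⁻ r in Set.Ioc 0 t, ENNReal.ofReal (24 * 6 ^ α) *
          ∑' ℓ, (if ℓ ≠ 0 ∧ nsq ℓ ≤ 2 ∧ ℓ ≠ k then modeEnergy (-(α + 1)) (a r) (ℓ - k) else 0) :=
        ENNReal.tsum_le_tsum fun k => by
          split_ifs with hk
          · exact ofReal_rpow_neg_mul_sq_integral_le a hα hk hs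
          · exact zero_le
    _ ≤ ENNReal.ofReal t * ∫⁻ r in Set.Ioc 0 t, ENNReal.ofReal (24 * 6 ^ α) *
          ∑' k, ∑' ℓ, (if ℓ ≠ 0 ∧ nsq ℓ ≤ 2 ∧ ℓ ≠ k then modeEnergy (-(α + 1)) (a r) (ℓ - k)
            else 0) := by
        rw [ENNReal.tsum_mul_left]
        gcongr 1
        refine (tsum_lintegral_le_lintegral_tsum _ _).trans_eq ?_
        simp_rw [ENNReal.tsum_mul_left]
    _ ≤ ENNReal.ofReal t * ∫⁻ _ in Set.Ioc 0 t, ENNReal.ofReal (24 * 6 ^ α) * (9 * M) := by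
        gcongr 1
        exact setLIntegral_mono' measurableSet_Ioc fun r hr => by gcongr; exact low_mode_sum_le r hr
    _ = _ := by rw [setLIntegral_const, Real.volume_Ioc, sub_zero]

end LowModeBound

/-- Deterministic core of the first bound of Lemma 5.3 (linearised SNS analogue of Lemma 4.3):
for `α > 1` there is `C > 0` such that for all `t > 0` and all families `(a_r)_{r∈[0,t]}` of
Fourier data with `a_r 0 = 0`, `r ↦ a_r m` continuous and
`sup_{r∈[0,t]} ∑_{m≠0} |m|^{−2(α+1)}|a_r m|² < ∞`,
`∫₀ᵗ ∑_{k≠0} |k|^{−2α} (∫ₛᵗ e^{−|k|²(r−s)}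
    (∑_{0<|ℓ|≤√2, ℓ≠k} (1 − |k|²/|ℓ−k|²)² |a_r(ℓ−k)|²)^{1/2} dr)² ds
  ≤ C t³ sup_{r∈[0,t]} ∑_{m≠0} |m|^{−2(α+1)}|a_r m|²`. -/
theorem low_mode_gaussian_bound_linearised_NS (α : ℝ) (hα : 1 < α) :
    ∃ C : ℝ, 0 < C ∧ ∀ t : ℝ, 0 < t → ∀ a : ℝ → (ℤ × ℤ) → ℂ,
      (∀ r ∈ Set.Icc (0 : ℝ) t, a r 0 = 0) →
      (∀ m : ℤ × ℤ, ContinuousOn (fun r => a r m) (Set.Icc 0 t)) →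
      (⨆ r ∈ Set.Icc (0 : ℝ) t, ∑' m : ℤ × ℤ,
          (if m ≠ 0 then ENNReal.ofReal ((nsq m) ^ (-(α + 1)) * ‖a r m‖ ^ 2) else 0)) < ⊤ →
      (∫⁻ s in Set.Ioc (0 : ℝ) t, ∑' k : ℤ × ℤ,
          (if k ≠ 0 then
            ENNReal.ofReal ((nsq k) ^ (-α) *
              (∫ r in s..t, Real.exp (-nsq k * (r - s)) *
                Real.sqrt (∑' ℓ : ℤ × ℤ,
                  if ℓ ≠ 0 ∧ nsq ℓ ≤ 2 ∧ ℓ ≠ k then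
                    (1 - nsq k / nsq (ℓ - k)) ^ 2 * ‖a r (ℓ - k)‖ ^ 2
                  else 0)) ^ 2)
          else 0)) ≤
        ENNReal.ofReal (C * t ^ 3) *
          ⨆ r ∈ Set.Icc (0 : ℝ) t, ∑' m : ℤ × ℤ,
            (if m ≠ 0 then ENNReal.ofReal ((nsq m) ^ (-(α + 1)) * ‖a r m‖ ^ 2) else 0) := by
  refine ⟨216 * 6 ^ α, by positivity, fun t ht a _ _ _ => ?_⟩
  set M := ⨆ r ∈ Set.Icc 0 t, sobolevSq (-(α + 1)) (a r)
  have constant_eq : ENNReal.ofReal (216 * 6 ^ α * t ^ 3) =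
      ENNReal.ofReal t * ENNReal.ofReal (24 * 6 ^ α) * 9 * ENNReal.ofReal t * ENNReal.ofReal t := by
    rw [show (216 : ℝ) * 6 ^ α * t ^ 3 = t * (24 * 6 ^ α) * 9 * t * t by ring,
      ENNReal.ofReal_mul' ht.le, ENNReal.ofReal_mul' ht.le, ENNReal.ofReal_mul' (by norm_num),
      ENNReal.ofReal_mul' (by positivity), ENNReal.ofReal_ofNat]
  calc _ ≤ ∫⁻ _ in Set.Ioc 0 t,
        ENNReal.ofReal t * (ENNReal.ofReal (24 * 6 ^ α) * (9 * M) * ENNReal.ofReal t) :=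
      setLIntegral_mono' measurableSet_Ioc fun s hs =>
        tsum_ofReal_rpow_neg_mul_sq_integral_le a (by linarith) hs
    _ = ENNReal.ofReal (216 * 6 ^ α * t ^ 3) * M := by
      rw [setLIntegral_const, Real.volume_Ioc, sub_zero, constant_eq]; ring
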